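/- arXiv:1909.10720 — 4 statements merged into one kernel-verified Lean document; each statement's English description precedes it below -/
import Mathlib

section
/- Define F(j,i,j',i',j'',i'') = \sum_{r=0}^{\min(i,i')} (-1)^r t^{j'r + r(r+1)/2} \alpha_{i+j-r} / (\alpha_{i-r} \alpha_r \alpha_{i'-r}) for nonnegative integers satisfying the balance condition i'-j = i''-j' = i-j''. Then F is a polynomial in t with integer coefficients. -/
open scoped BigOperators

/-- The indeterminate `t`, as a rational function over `ℚ`. -/
noncomputable def t : RatFunc ℚ := RatFunc.X

/-- `α m = ∏_{s=1}^m (1 - t^s)`. -/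
noncomputable def al (m : ℕ) : RatFunc ℚ := ∏ s ∈ Finset.range m, (1 - t ^ (s + 1))

/-- The honeycomb vertex fugacity. -/
noncomputable def F (j i j' i' j'' i'' : ℕ) : RatFunc ℚ :=
  ∑ r ∈ Finset.range (min i i' + 1),
    (-1 : RatFunc ℚ) ^ r * t ^ (j' * r + r * (r + 1) / 2) * al (i + j - r) /
      (al (i - r) * al r * al (i' - r))

/-!
Split the `r`-th summand of `F` as `weight j' i' r * ratio i j r`, where
`ratio i j r = α_{i+j-r} / α_{i-r}` is extended by zero to `r > i`; the sum then runs over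
`r ≤ i'` whatever `i` is. The `q`-Pascal relations of `ratio` give, with `i'` fixed, the
recurrences `F (j+1) (i+1) j' = t^(j+1) F (j+1) i j' + (1 - t^(j+1)) F j (i+1) j'` and
`F j (i+1) (j'+1) = F (j+1) i (j'+1) + t^(i+1) F j (i+1) j'`.
The balance condition amounts to `i' ≤ i + j` and `j ≤ i' + j'`, and induction on
`2i + j + j'` inside this region ends on its boundary: for `i = 0`, `F = α_j / α_{i'}` with
`i' ≤ j`, a product of factors `1 - t^s`; for `j' = 0` and `j = 0` or `i' = i + j`, `F = 1`
by the alternating `q`-binomial identity `∑_r (-1)^r t^(r(r+1)/2) / (α_r α_{n-r}) = 1`.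
-/

open Finset

namespace Fugacity

theorem one_sub_t_pow_ne_zero {n : ℕ} (hn : n ≠ 0) : (1 : RatFunc ℚ) - t ^ n ≠ 0 := by
  have hX : (1 - Polynomial.X ^ n : Polynomial ℚ) ≠ 0 := by
    rw [← neg_sub, neg_ne_zero, ← Polynomial.C_1]
    exact Polynomial.X_pow_sub_C_ne_zero (Nat.pos_of_ne_zero hn) 1
  simpa [t] using (map_ne_zero_iff _ (RatFunc.algebraMap_injective ℚ)).2 hX

theorem al_succ (m : ℕ) : al (m + 1) = al m * (1 - t ^ (m + 1)) :=
  prod_range_succ _ _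

theorem al_ne_zero (m : ℕ) : al m ≠ 0 :=
  prod_ne_zero_iff.2 fun _ _ => one_sub_t_pow_ne_zero (Nat.succ_ne_zero _)

theorem al_add (m k : ℕ) : al (m + k) = al m * ∏ s ∈ range k, (1 - t ^ (m + s + 1)) :=
  prod_range_add _ _ _

noncomputable def intPolys : Subring (RatFunc ℚ) := Subring.closure {t}

theorem t_mem_intPolys : t ∈ intPolys := Subring.subset_closure rfl

theorem one_sub_t_pow_mem_intPolys (n : ℕ) : 1 - t ^ n ∈ intPolys :=
  sub_mem (one_mem _) (pow_mem t_mem_intPolys n)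

theorem al_add_div_al_mem_intPolys (m k : ℕ) : al (m + k) / al m ∈ intPolys := by
  rw [al_add, mul_div_cancel_left₀ _ (al_ne_zero m)]
  exact prod_mem fun _ _ => one_sub_t_pow_mem_intPolys _

theorem exists_intPoly_of_mem_intPolys {x : RatFunc ℚ} (hx : x ∈ intPolys) :
    ∃ p : Polynomial ℤ,
      x = algebraMap (Polynomial ℚ) (RatFunc ℚ) (p.map (Int.castRingHom ℚ)) := by
  have hle : intPolys ≤ ((algebraMap (Polynomial ℚ) (RatFunc ℚ)).comp
      (Polynomial.mapRingHom (Int.castRingHom ℚ))).range :=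
    Subring.closure_le.2 <| Set.singleton_subset_iff.2 ⟨Polynomial.X, by simp [t]⟩
  obtain ⟨p, hp⟩ := hle hx
  exact ⟨p, hp.symm⟩

noncomputable def weight (j' i' r : ℕ) : RatFunc ℚ :=
  (-1) ^ r * t ^ (j' * r + r * (r + 1) / 2) / (al r * al (i' - r))

noncomputable def ratio (i j r : ℕ) : RatFunc ℚ :=
  if r ≤ i then al (i + j - r) / al (i - r) else 0

theorem ratio_of_lt {i j r : ℕ} (h : i < r) : ratio i j r = 0 :=
  if_neg h.not_ge

theorem F_eq_sum_weight_mul_ratio (j i j' i' j'' i'' : ℕ) :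
    F j i j' i' j'' i'' = ∑ r ∈ range (i' + 1), weight j' i' r * ratio i j r := by
  have hsub : range (min i i' + 1) ⊆ range (i' + 1) := range_subset_range.2 (by omega)
  rw [F, ← sum_subset hsub fun r hr hr' => by
    rw [ratio_of_lt (by simp only [mem_range] at hr hr'; omega), mul_zero]]
  refine sum_congr rfl fun r hr => ?_
  rw [ratio, if_pos (by simp only [mem_range] at hr; omega), weight]
  field_simp

theorem weight_succ (j' i' r : ℕ) : weight (j' + 1) i' r = t ^ r * weight j' i' r := by
  rw [weight, weight, add_mul, one_mul, add_right_comm, pow_add]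
  ring

theorem ratio_zero_right {i r : ℕ} (h : r ≤ i) : ratio i 0 r = 1 := by
  rw [ratio, if_pos h, add_zero, div_self (al_ne_zero _)]

theorem ratio_succ_right (i j r : ℕ) :
    ratio i (j + 1) r = (1 - t ^ (i + j + 1 - r)) * ratio i j r := by
  unfold ratio
  split_ifs with h
  · rw [show i + (j + 1) - r = i + j - r + 1 by omega,
      show i + j + 1 - r = i + j - r + 1 by omega, al_succ]
    ring
  · rw [mul_zero]

theorem ratio_succ_right_eq_succ_left (i j r : ℕ) :
    ratio i (j + 1) r = (1 - t ^ (i + 1 - r)) * ratio (i + 1) j r := by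
  rcases lt_trichotomy r (i + 1) with h | rfl | h
  · rw [ratio, ratio, if_pos (by omega), if_pos (by omega),
      show i + (j + 1) - r = i + 1 + j - r by omega, show i + 1 - r = i - r + 1 by omega, al_succ]
    field_simp [one_sub_t_pow_ne_zero (Nat.succ_ne_zero (i - r)), al_ne_zero]
  · rw [ratio_of_lt (Nat.lt_succ_self i), Nat.sub_self, pow_zero, sub_self, zero_mul]
  · rw [ratio_of_lt (by omega), ratio_of_lt h, mul_zero]

theorem ratio_succ_succ (i j r : ℕ) :
    ratio (i + 1) (j + 1) r =
      t ^ (j + 1) * ratio i (j + 1) r + (1 - t ^ (j + 1)) * ratio (i + 1) j r := by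
  rcases le_or_gt r (i + 1) with h | h
  · rw [ratio_succ_right, ratio_succ_right_eq_succ_left,
      show i + 1 + j + 1 - r = i + 1 - r + (j + 1) by omega, pow_add]
    ring
  · rw [ratio_of_lt h, ratio_of_lt h, ratio_of_lt (by omega)]
    ring

theorem t_pow_mul_ratio_succ_left (i j r : ℕ) :
    t ^ r * ratio (i + 1) j r = t ^ r * ratio i (j + 1) r + t ^ (i + 1) * ratio (i + 1) j r := by
  rcases le_or_gt r (i + 1) with h | h
  · rw [ratio_succ_right_eq_succ_left, ← Nat.add_sub_cancel' h, Nat.add_sub_cancel_left, pow_add]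
    ring
  · rw [ratio_of_lt h, ratio_of_lt (by omega)]
    ring

theorem F_succ_j_succ_i (j i j' i' j'' i'' : ℕ) :
    F (j + 1) (i + 1) j' i' j'' i'' =
      t ^ (j + 1) * F (j + 1) i j' i' j'' i'' +
        (1 - t ^ (j + 1)) * F j (i + 1) j' i' j'' i'' := by
  simp only [F_eq_sum_weight_mul_ratio, mul_sum, ← sum_add_distrib, ratio_succ_succ]
  exact sum_congr rfl fun _ _ => by ring

theorem F_succ_i_succ_j' (j i j' i' j'' i'' : ℕ) :
    F j (i + 1) (j' + 1) i' j'' i'' =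
      F (j + 1) i (j' + 1) i' j'' i'' + t ^ (i + 1) * F j (i + 1) j' i' j'' i'' := by
  simp only [F_eq_sum_weight_mul_ratio, mul_sum, ← sum_add_distrib, weight_succ]
  exact sum_congr rfl fun r _ => by
    linear_combination weight j' i' r * t_pow_mul_ratio_succ_left i j r

theorem one_sub_t_pow_mul_weight_succ {r n : ℕ} (h : r ≤ n) (j' : ℕ) :
    (1 - t ^ (n + 1 - r)) * weight j' (n + 1) r = weight j' n r := by
  rw [weight, weight, show n + 1 - r = n - r + 1 by omega, al_succ]
  field_simp [one_sub_t_pow_ne_zero (Nat.succ_ne_zero (n - r)), al_ne_zero]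

theorem one_sub_t_pow_mul_weight_succ_succ (j' n r : ℕ) :
    (1 - t ^ (r + 1)) * weight j' (n + 1) (r + 1) = -t ^ (j' + r + 1) * weight j' n r := by
  have htri : (r + 1) * (r + 1 + 1) / 2 = r * (r + 1) / 2 + (r + 1) := by
    rw [show (r + 1) * (r + 1 + 1) = r * (r + 1) + 2 * (r + 1) by ring,
      Nat.add_mul_div_left _ _ two_pos]
  rw [weight, weight, Nat.add_sub_add_right, al_succ, htri,
    show j' * (r + 1) + (r * (r + 1) / 2 + (r + 1)) = j' * r + r * (r + 1) / 2 + (j' + r + 1) by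
      ring]
  field_simp [one_sub_t_pow_ne_zero (Nat.succ_ne_zero r), al_ne_zero]
  ring

theorem sum_weight_zero (n : ℕ) : ∑ r ∈ range (n + 1), weight 0 n r = 1 := by
  induction n with
  | zero => simp [weight, al]
  | succ n ih =>
    refine mul_left_cancel₀ (one_sub_t_pow_ne_zero n.succ_ne_zero) ?_
    have hsplit : ∀ r ∈ range (n + 1 + 1), (1 - t ^ (n + 1)) * weight 0 (n + 1) r =
        (1 - t ^ (n + 1 - r)) * weight 0 (n + 1) r +
          t ^ (n + 1 - r) * ((1 - t ^ r) * weight 0 (n + 1) r) := by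
      intro r hr
      rw [← Nat.sub_add_cancel (Nat.lt_succ_iff.1 (mem_range.1 hr)), Nat.add_sub_cancel, pow_add]
      ring
    calc (1 - t ^ (n + 1)) * ∑ r ∈ range (n + 1 + 1), weight 0 (n + 1) r
        = ∑ r ∈ range (n + 1), weight 0 n r +
            ∑ r ∈ range (n + 1), -(t ^ (n + 1) * weight 0 n r) := by
          rw [mul_sum, sum_congr rfl hsplit, sum_add_distrib, sum_range_succ,
            sum_range_succ' _ (n + 1)]
          simp only [Nat.sub_self, pow_zero, sub_self, zero_mul, mul_zero, add_zero,
            Nat.add_sub_add_right]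
          congr 1
          · exact sum_congr rfl fun r hr =>
              one_sub_t_pow_mul_weight_succ (Nat.lt_succ_iff.1 (mem_range.1 hr)) 0
          · refine sum_congr rfl fun r hr => ?_
            rw [one_sub_t_pow_mul_weight_succ_succ, zero_add, ← mul_assoc, mul_neg, ← pow_add,
              show n - r + (r + 1) = n + 1 by simp only [mem_range] at hr; omega,
              neg_mul_eq_neg_mul]
      _ = (1 - t ^ (n + 1)) * 1 := by rw [sum_neg_distrib, ← mul_sum, ih]; ring

theorem F_i_zero (j j' i' j'' i'' : ℕ) : F j 0 j' i' j'' i'' = al j / al i' := by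
  simp [F, al]

theorem F_j_zero_j'_zero {i i' : ℕ} (h : i' ≤ i) (j'' i'' : ℕ) : F 0 i 0 i' j'' i'' = 1 := by
  rw [F_eq_sum_weight_mul_ratio, ← sum_weight_zero i']
  exact sum_congr rfl fun r hr => by
    rw [ratio_zero_right (by simp only [mem_range] at hr; omega), mul_one]

theorem weight_add_mul_ratio {i r : ℕ} (h : r ≤ i) (j' j : ℕ) :
    weight j' (i + j) r * ratio i j r = weight j' i r := by
  rw [weight, weight, ratio, if_pos h, show i + j - r = i - r + j by omega]
  field_simp [al_ne_zero]

theorem F_j'_zero_diag (j i j'' i'' : ℕ) : F j i 0 (i + j) j'' i'' = 1 := by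
  have hsub : range (i + 1) ⊆ range (i + j + 1) := range_subset_range.2 (by omega)
  rw [F_eq_sum_weight_mul_ratio, ← sum_weight_zero i, ← sum_subset hsub fun r hr hr' => by
    rw [ratio_of_lt (by simp only [mem_range] at hr hr'; omega), mul_zero]]
  exact sum_congr rfl fun r hr =>
    weight_add_mul_ratio (Nat.lt_succ_iff.1 (mem_range.1 hr)) 0 j

theorem F_mem_intPolys {j i j' i' : ℕ} (hi' : i' ≤ i + j) (hj : j ≤ i' + j') (j'' i'' : ℕ) :
    F j i j' i' j'' i'' ∈ intPolys := by
  induction hn : 2 * i + j + j' using Nat.strong_induction_on generalizing j i j' with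
  | _ n ih =>
  have ih' {a b c : ℕ} (hlt : 2 * b + a + c < n) (h₁ : i' ≤ b + a) (h₂ : a ≤ i' + c) :
      F a b c i' j'' i'' ∈ intPolys :=
    ih _ hlt h₁ h₂ rfl
  have t_pow_mem (k : ℕ) : t ^ k ∈ intPolys := pow_mem t_mem_intPolys k
  rcases i with _ | i
  · rw [F_i_zero, ← Nat.add_sub_cancel' (show i' ≤ j by omega)]
    exact al_add_div_al_mem_intPolys _ _
  by_cases hj'_step : 0 < j' ∧ j < i' + j'
  · obtain ⟨j', rfl⟩ : ∃ k, j' = k + 1 := ⟨j' - 1, by omega⟩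
    rw [F_succ_i_succ_j']
    exact add_mem (ih' (by omega) (by omega) (by omega))
      (mul_mem (t_pow_mem _) (ih' (by omega) (by omega) (by omega)))
  by_cases hj_step : 0 < j ∧ i' < i + 1 + j
  · obtain ⟨j, rfl⟩ : ∃ k, j = k + 1 := ⟨j - 1, by omega⟩
    rw [F_succ_j_succ_i]
    exact add_mem (mul_mem (t_pow_mem _) (ih' (by omega) (by omega) (by omega)))
      (mul_mem (one_sub_t_pow_mem_intPolys _) (ih' (by omega) (by omega) (by omega)))
  obtain rfl : j' = 0 := by omega
  rcases Nat.eq_zero_or_pos j with rfl | hj₀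
  · rw [F_j_zero_j'_zero (by omega)]
    exact one_mem _
  · obtain rfl : i' = i + 1 + j := by omega
    rw [F_j'_zero_diag]
    exact one_mem _

end Fugacity

/-- Under the balance condition, the fugacity is a polynomial in  with integer
coefficients. -/
theorem fugacity_is_int_polynomial (j i j' i' j'' i'' : ℕ)
    (h1 : (i' : ℤ) - j = (i'' : ℤ) - j') (h2 : (i'' : ℤ) - j' = (i : ℤ) - j'') :
    ∃ p : Polynomial ℤ,
      F j i j' i' j'' i'' =
        algebraMap (Polynomial ℚ) (RatFunc ℚ) (p.map (Int.castRingHom ℚ)) :=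
  Fugacity.exists_intPoly_of_mem_intPolys (Fugacity.F_mem_intPolys (by omega) (by omega) j'' i'')
end

section
/- Define u(j,i,j',i',j'',i'') = (\alpha_{i+j} / (\alpha_i \alpha_{i'} \alpha_{i''} \alpha_j \alpha_{j''})) \cdot \sum_{n=0}^{\min(i,i')} \frac{(t^{-i};t)_n (t^{-i'};t)_n}{(t;t)_n (t^{-(i+j)};t)_n} t^{n(i''+1)} for nonnegative integers satisfying i'-j = i''-j' = i-j''. Then u(j,i,j',i',j'',i'') = u(j'',i',j',i,j,i''), i.e. u is invariant under the reflection (j,i,j',i',j'',i'') \mapsto (j'',i',j',i,j,i''). -/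
open scoped BigOperators

/-- The q-Pochhammer symbol `(x;t)_n = ∏_{r=0}^{n-1} (1 - x t^r)`. -/
noncomputable def poch (x : RatFunc ℚ) (n : ℕ) : RatFunc ℚ :=
  ∏ r ∈ Finset.range n, (1 - x * t ^ r)

/-- The normalized fugacity
`u(j,i,j',i',j'',i'') = (α_{i+j}/(α_i α_{i'} α_{i''} α_j α_{j''})) ·
  ∑_{n=0}^{min(i,i')} (t^{-i};t)_n (t^{-i'};t)_n / ((t;t)_n (t^{-(i+j)};t)_n) · t^{n(i''+1)}`. -/
noncomputable def u (j i j' i' j'' i'' : ℕ) : RatFunc ℚ :=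
  al (i + j) / (al i * al i' * al i'' * al j * al j'') *
    ∑ n ∈ Finset.range (min i i' + 1),
      poch (t ^ (-(i : ℤ))) n * poch (t ^ (-(i' : ℤ))) n /
          (poch t n * poch (t ^ (-((i : ℤ) + (j : ℤ)))) n) *
        t ^ (n * (i'' + 1))

theorem u_swap_of_add_eq_add {j i j' i' j'' i'' : ℕ} (h : i' + j'' = i + j) :
    u j i j' i' j'' i'' = u j'' i' j' i j i'' := by
  have hz : (i' : ℤ) + j'' = i + j := by exact_mod_cast h
  unfold u
  rw [h, hz, min_comm i' i]
  congr 1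
  · ring
  · exact Finset.sum_congr rfl fun n _ => by ring

/-- `u` is invariant under the reflection `(j,i,j',i',j'',i'') ↦ (j'',i',j',i,j,i'')`. -/
theorem u_reflection (j i j' i' j'' i'' : ℕ)
    (h1 : (i' : ℤ) - j = (i'' : ℤ) - j') (h2 : (i'' : ℤ) - j' = (i : ℤ) - j'') :
    u j i j' i' j'' i'' = u j'' i' j' i j i'' :=
  u_swap_of_add_eq_add (by omega)
end

section
/- Define u(j,i,j',i',j'',i'') as in the balanced terminating basic hypergeometric sum. Then u is invariant under the transformation (j,i,j',i',j'',i'') \mapsto (i',j'',i'',j,i,j') (a Heine transformation of {}_2\phi_1). -/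
/-!
With `N = i + j = i' + j''`, both sides of the identity are `α`-prefactors times terminating series
`₂φ₁(q^{-a}, q^{-b}; q^{-N}; q, q^{c+1})` at `q = t`, and the claim is Heine's transformation
`(a, b, c) ↦ (N - b, N - a, c + N - a - b)`. Expanding `(q^{-a};q)_n / (q^{-N};q)_n` by the
q-Chu–Vandermonde identity, exchanging the two sums and summing the inner one by the q-binomial
theorem turns `₂φ₁` into a single sum over `m` whose terms are visibly symmetric, except for a
factor `(q^d;q)_{c+1-d}` with `d = c + 1 + m - b`. Divided by `(q;q)_c`, this factor depends only on `d`,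
which is the same on both sides.
-/

open scoped BigOperators

open Finset

section QPochhammer

variable {R : Type*} [CommRing R]

def qPoch (q x : R) (n : ℕ) : R := ∏ r ∈ range n, (1 - x * q ^ r)

theorem qPoch_zero (q x : R) : qPoch q x 0 = 1 := prod_range_zero _

theorem qPoch_succ (q x : R) (n : ℕ) :
    qPoch q x (n + 1) = qPoch q x n * (1 - x * q ^ n) :=
  prod_range_succ _ _

theorem qPoch_add (q x : R) (m n : ℕ) :
    qPoch q x (m + n) = qPoch q x m * qPoch q (x * q ^ m) n := by
  simp only [qPoch, prod_range_add, mul_assoc, ← pow_add]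

theorem qPoch_succ' (q x : R) (n : ℕ) : qPoch q x (n + 1) = (1 - x) * qPoch q (x * q) n := by
  rw [add_comm, qPoch_add, pow_one]
  simp [qPoch]

end QPochhammer

theorem Nat.choose_two_succ (m : ℕ) : (m + 1).choose 2 = m.choose 2 + m := by
  rw [Nat.choose_succ_succ', Nat.choose_one_right, add_comm]

section Field

variable {K : Type*} [Field K] {q : K}

theorem one_sub_pow_ne_zero (hq : ¬IsOfFinOrder q) {n : ℕ} (hn : n ≠ 0) : 1 - q ^ n ≠ 0 :=
  fun h ↦ hq (isOfFinOrder_iff_pow_eq_one.2 ⟨n, Nat.pos_of_ne_zero hn, (sub_eq_zero.1 h).symm⟩)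

theorem one_sub_zpow_ne_zero (hq : ¬IsOfFinOrder q) {z : ℤ} (hz : z ≠ 0) :
    1 - q ^ z ≠ 0 := by
  obtain ⟨n, rfl | rfl⟩ := Int.eq_nat_or_neg z
  · exact_mod_cast one_sub_pow_ne_zero hq (by omega)
  · rw [zpow_neg, zpow_natCast, sub_ne_zero, ne_comm, inv_ne_one, ne_comm, ← sub_ne_zero]
    exact one_sub_pow_ne_zero hq (by omega)

theorem qPoch_self_ne_zero (hq : ¬IsOfFinOrder q) (n : ℕ) : qPoch q q n ≠ 0 :=
  prod_ne_zero_iff.2 fun r _ ↦ by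
    rw [← pow_succ']
    exact one_sub_pow_ne_zero hq r.succ_ne_zero

theorem qPoch_zpow_neg_eq_zero (hq0 : q ≠ 0) {n m : ℕ} (h : n < m) :
    qPoch q (q ^ (-(n : ℤ))) m = 0 :=
  prod_eq_zero (mem_range.2 h) (by rw [← zpow_natCast, ← zpow_add₀ hq0]; simp)

theorem qPoch_zpow_neg_ne_zero (hq0 : q ≠ 0) (hq : ¬IsOfFinOrder q) {n m : ℕ} (h : m ≤ n) :
    qPoch q (q ^ (-(n : ℤ))) m ≠ 0 :=
  prod_ne_zero_iff.2 fun r hr ↦ by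
    rw [← zpow_natCast, ← zpow_add₀ hq0]
    exact one_sub_zpow_ne_zero hq (by have := mem_range.1 hr; omega)

theorem qPoch_zpow_neg_mul_qPoch_self (hq0 : q ≠ 0) {m n : ℕ} (h : m ≤ n) :
    qPoch q (q ^ (-(n : ℤ))) m * qPoch q q (n - m) =
      (-1) ^ m * q ^ ((m.choose 2 : ℤ) - n * m) * qPoch q q n := by
  obtain ⟨k, rfl⟩ := Nat.exists_eq_add_of_le' h
  rw [Nat.add_sub_cancel]
  induction m with
  | zero => simp [qPoch_zero]
  | succ m ih =>
    have hstep : qPoch q (q ^ (-((k + (m + 1) : ℕ) : ℤ))) (m + 1) =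
        (1 - q ^ (-((k + (m + 1) : ℕ) : ℤ))) * qPoch q (q ^ (-((k + m : ℕ) : ℤ))) m := by
      rw [qPoch_succ', ← zpow_add_one₀ hq0]
      congr 3
      push_cast; ring
    have hexp : q ^ (((m + 1).choose 2 : ℕ) - ((k + (m + 1) : ℕ) : ℤ) * (m + 1 : ℕ)) =
        q ^ ((m.choose 2 : ℤ) - (k + m : ℕ) * m) * q ^ (-((k + (m + 1) : ℕ) : ℤ)) := by
      rw [← zpow_add₀ hq0, Nat.choose_two_succ]
      congr 1
      push_cast; ring
    have hinv : q ^ (-((k + (m + 1) : ℕ) : ℤ)) * q ^ (k + m + 1) = 1 := by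
      rw [← zpow_natCast, ← zpow_add₀ hq0, show k + (m + 1) = k + m + 1 by ring, neg_add_cancel,
        zpow_zero]
    rw [hstep, hexp, show k + (m + 1) = k + m + 1 by ring, qPoch_succ q q (k + m), ← pow_succ']
    linear_combination (1 - q ^ (-((k + m + 1 : ℕ) : ℤ))) * ih (by omega) -
      (-1) ^ m * q ^ ((m.choose 2 : ℤ) - (k + m : ℕ) * m) * qPoch q q (k + m) * hinv

def qBinom (q : K) (n k : ℕ) : K :=
  if k ≤ n then qPoch q q n / (qPoch q q k * qPoch q q (n - k)) else 0

theorem qBinom_of_le {n k : ℕ} (h : k ≤ n) :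
    qBinom q n k = qPoch q q n / (qPoch q q k * qPoch q q (n - k)) :=
  if_pos h

theorem qBinom_of_lt {n k : ℕ} (h : n < k) : qBinom q n k = 0 := if_neg (by omega)

theorem qBinom_zero_right (hq : ¬IsOfFinOrder q) (n : ℕ) : qBinom q n 0 = 1 := by
  rw [qBinom_of_le n.zero_le, qPoch_zero, one_mul, Nat.sub_zero, div_self (qPoch_self_ne_zero hq n)]

theorem qBinom_self (hq : ¬IsOfFinOrder q) (n : ℕ) : qBinom q n n = 1 := by
  rw [qBinom_of_le le_rfl, Nat.sub_self, qPoch_zero, mul_one, div_self (qPoch_self_ne_zero hq n)]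

theorem qBinom_ne_zero (hq : ¬IsOfFinOrder q) {n k : ℕ} (h : k ≤ n) : qBinom q n k ≠ 0 := by
  rw [qBinom_of_le h]
  exact div_ne_zero (qPoch_self_ne_zero hq n)
    (mul_ne_zero (qPoch_self_ne_zero hq k) (qPoch_self_ne_zero hq (n - k)))

/-- Both Pascal rules reduce, after clearing denominators, to
`1 - q^(k+l+2) = (1 - q^(k+1)) + q^(k+1) (1 - q^(l+1)) = (1 - q^(l+1)) + q^(l+1) (1 - q^(k+1))`. -/
theorem qBinom_succ_succ_of_lt (hq : ¬IsOfFinOrder q) {n k : ℕ} (h : k < n) :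
    qBinom q (n + 1) (k + 1) = qBinom q n k + q ^ (k + 1) * qBinom q n (k + 1) ∧
      qBinom q (n + 1) (k + 1) = qBinom q n (k + 1) + q ^ (n - k) * qBinom q n k := by
  obtain ⟨l, rfl⟩ := Nat.exists_eq_add_of_lt h
  rw [qBinom_of_le (by omega : k + 1 ≤ k + l + 1 + 1), qBinom_of_le (by omega : k ≤ k + l + 1),
    qBinom_of_le (by omega : k + 1 ≤ k + l + 1), show k + l + 1 + 1 - (k + 1) = l + 1 by omega,
    show k + l + 1 - k = l + 1 by omega, show k + l + 1 - (k + 1) = l by omega,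
    qPoch_succ q q (k + l + 1), qPoch_succ q q k, qPoch_succ q q l]
  have := qPoch_self_ne_zero hq
  have hk : 1 - q * q ^ k ≠ 0 := by rw [← pow_succ']; exact one_sub_pow_ne_zero hq (by omega)
  have hl : 1 - q * q ^ l ≠ 0 := by rw [← pow_succ']; exact one_sub_pow_ne_zero hq (by omega)
  constructor <;> field_simp <;> ring

theorem qBinom_succ_succ (hq : ¬IsOfFinOrder q) (n k : ℕ) :
    qBinom q (n + 1) (k + 1) = qBinom q n k + q ^ (k + 1) * qBinom q n (k + 1) := by
  rcases lt_trichotomy k n with h | rfl | h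
  · exact (qBinom_succ_succ_of_lt hq h).1
  · rw [qBinom_self hq, qBinom_self hq, qBinom_of_lt (Nat.lt_succ_self k), mul_zero, add_zero]
  · rw [qBinom_of_lt (by omega), qBinom_of_lt h, qBinom_of_lt (by omega), mul_zero, add_zero]

theorem qBinom_succ_succ' (hq : ¬IsOfFinOrder q) (n k : ℕ) :
    qBinom q (n + 1) (k + 1) = qBinom q n (k + 1) + q ^ (n - k) * qBinom q n k := by
  rcases lt_trichotomy k n with h | rfl | h
  · exact (qBinom_succ_succ_of_lt hq h).2
  · rw [qBinom_self hq, qBinom_self hq, qBinom_of_lt (Nat.lt_succ_self k), Nat.sub_self, pow_zero,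
      one_mul, zero_add]
  · rw [qBinom_of_lt (by omega), qBinom_of_lt h, qBinom_of_lt (by omega), mul_zero, add_zero]

theorem qBinom_mul_qBinom (hq : ¬IsOfFinOrder q) (c e m : ℕ) :
    qBinom q (c + e) m * qBinom q (c + e - m) e = qBinom q (c + e) e * qBinom q c m := by
  rcases le_or_gt m c with h | h
  · rw [qBinom_of_le (by omega : m ≤ c + e), qBinom_of_le (by omega : e ≤ c + e - m),
      qBinom_of_le (by omega : e ≤ c + e), qBinom_of_le h, show c + e - m - e = c - m by omega,
      Nat.add_sub_cancel]
    have h₁ := qPoch_self_ne_zero hq (c + e - m)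
    have h₂ := qPoch_self_ne_zero hq c
    field_simp
  · rw [qBinom_of_lt h, mul_zero]
    rcases lt_or_ge (c + e - m) e with h' | h'
    · rw [qBinom_of_lt h', mul_zero]
    · rw [qBinom_of_lt (by omega : c + e < m), zero_mul]

theorem qBinom_add_symm (c e : ℕ) : qBinom q (c + e) c = qBinom q (c + e) e := by
  rw [qBinom_of_le (by omega), qBinom_of_le (by omega), Nat.add_sub_cancel_left, Nat.add_sub_cancel,
    mul_comm]

theorem qPoch_zpow_neg_div_qPoch_self (hq0 : q ≠ 0) (hq : ¬IsOfFinOrder q) (n m : ℕ) :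
    qPoch q (q ^ (-(n : ℤ))) m / qPoch q q m =
      (-1) ^ m * q ^ ((m.choose 2 : ℤ) - n * m) * qBinom q n m := by
  rcases le_or_gt m n with h | h
  · have h₁ := qPoch_self_ne_zero hq m
    have h₂ := qPoch_self_ne_zero hq (n - m)
    rw [qBinom_of_le h]
    field_simp
    linear_combination qPoch_zpow_neg_mul_qPoch_self hq0 h
  · rw [qPoch_zpow_neg_eq_zero hq0 h, qBinom_of_lt h, zero_div, mul_zero]

def qBinomAltSum (q : K) (n : ℕ) (x : ℕ → K) : K :=
  ∑ m ∈ range (n + 1), (-1) ^ m * q ^ m.choose 2 * qBinom q n m * x m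

theorem qBinomAltSum_zero (hq : ¬IsOfFinOrder q) (x : ℕ → K) : qBinomAltSum q 0 x = x 0 := by
  simp [qBinomAltSum, qBinom_self hq]

theorem qBinomAltSum_succ (hq : ¬IsOfFinOrder q) (n : ℕ) (x : ℕ → K) :
    qBinomAltSum q (n + 1) x =
      qBinomAltSum q n x - q ^ n * qBinomAltSum q n (fun m ↦ x (m + 1)) := by
  have hsplit : ∀ m ∈ range (n + 1),
      (-1) ^ (m + 1) * q ^ (m + 1).choose 2 * qBinom q (n + 1) (m + 1) * x (m + 1) =
        (-1) ^ (m + 1) * q ^ (m + 1).choose 2 * qBinom q n (m + 1) * x (m + 1) -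
          q ^ n * ((-1) ^ m * q ^ m.choose 2 * qBinom q n m * x (m + 1)) := by
    intro m hm
    have hpow : q ^ (m.choose 2 + m) * q ^ (n - m) = q ^ m.choose 2 * q ^ n := by
      rw [← pow_add, ← pow_add]
      congr 1
      have := mem_range.1 hm
      omega
    rw [qBinom_succ_succ' hq, Nat.choose_two_succ, pow_succ]
    linear_combination (-(-1) ^ m * qBinom q n m * x (m + 1)) * hpow
  have hshift := sum_range_succ' (fun m ↦ (-1) ^ m * q ^ m.choose 2 * qBinom q n m * x m) (n + 1)
  rw [sum_range_succ, qBinom_of_lt n.lt_succ_self, qBinom_zero_right hq] at hshift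
  unfold qBinomAltSum
  rw [sum_range_succ', sum_congr rfl hsplit, sum_sub_distrib, ← mul_sum, qBinom_zero_right hq]
  linear_combination -hshift

/-- The q-binomial theorem. -/
theorem qPoch_eq_qBinomAltSum (hq : ¬IsOfFinOrder q) (z : K) (n : ℕ) :
    qPoch q z n = qBinomAltSum q n (fun m ↦ z ^ m) := by
  induction n with
  | zero => rw [qPoch_zero, qBinomAltSum_zero hq, pow_zero]
  | succ n ih =>
    have hz : qBinomAltSum q n (fun m ↦ z ^ (m + 1)) = z * qBinomAltSum q n (fun m ↦ z ^ m) := by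
      rw [qBinomAltSum, qBinomAltSum, mul_sum]
      exact sum_congr rfl fun _ _ ↦ by ring
    rw [qPoch_succ, qBinomAltSum_succ hq, hz, ← ih]
    ring

/-- The q-Chu–Vandermonde identity. -/
theorem qBinomAltSum_qBinom (hq : ¬IsOfFinOrder q) (e : ℕ) {n c : ℕ} (h : n ≤ c + e) :
    qBinomAltSum q n (fun m ↦ qBinom q (c + e - m) e) = q ^ (n * c) * qBinom q (c + e - n) c := by
  induction n generalizing c with
  | zero => rw [qBinomAltSum_zero hq, zero_mul, pow_zero, one_mul, Nat.sub_zero, qBinom_add_symm]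
  | succ n ih =>
    rw [qBinomAltSum_succ hq, ih (by omega)]
    rcases c with _ | c
    · have hvanish : qBinomAltSum q n (fun m ↦ qBinom q (0 + e - (m + 1)) e) = 0 :=
        sum_eq_zero fun m _ ↦ by
          simp only [qBinom_of_lt (by omega : 0 + e - (m + 1) < e), mul_zero]
      rw [hvanish, Nat.mul_zero, Nat.mul_zero, qBinom_zero_right hq, qBinom_zero_right hq]
      ring
    · have hshift :
          (fun m ↦ qBinom q (c + 1 + e - (m + 1)) e) = fun m ↦ qBinom q (c + e - m) e := by
        ext m
        congr 1
        omega
      rw [hshift, ih (by omega), show c + 1 + e - n = c + e - n + 1 by omega, qBinom_succ_succ hq,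
        show c + 1 + e - (n + 1) = c + e - n by omega]
      ring

theorem sum_qPoch_zpow_neg_div_mul_pow (hq0 : q ≠ 0) (hq : ¬IsOfFinOrder q) (z : K) {r R : ℕ}
    (h : r ≤ R) :
    ∑ p ∈ range (R + 1), qPoch q (q ^ (-(r : ℤ))) p / qPoch q q p * z ^ p =
      qPoch q (z * q ^ (-(r : ℤ))) r := by
  have hvanish : ∀ p ∈ range (R + 1), p ∉ range (r + 1) →
      qPoch q (q ^ (-(r : ℤ))) p / qPoch q q p * z ^ p = 0 := fun p _ hp ↦ by
    rw [qPoch_zpow_neg_eq_zero hq0 (by simpa using hp), zero_div, zero_mul]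
  rw [← sum_subset (range_subset_range.2 (by omega)) hvanish, qPoch_eq_qBinomAltSum hq]
  refine sum_congr rfl fun p _ ↦ ?_
  have hpow : q ^ ((p.choose 2 : ℤ) - r * p) = q ^ p.choose 2 * (q ^ (-(r : ℤ))) ^ p := by
    rw [← zpow_natCast (q ^ _), ← zpow_mul, ← zpow_natCast q, ← zpow_add₀ hq0]
    ring_nf
  rw [qPoch_zpow_neg_div_qPoch_self hq0 hq, hpow]
  ring

theorem qPoch_zpow_neg_div_qPoch_zpow_neg (hq0 : q ≠ 0) (hq : ¬IsOfFinOrder q) {c e N m : ℕ}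
    (hN : c + e = N) (hm : m ≤ N) :
    qPoch q (q ^ (-(c : ℤ))) m / qPoch q (q ^ (-(N : ℤ))) m =
      q ^ (e * m) * qBinom q (N - m) e / qBinom q N e := by
  subst hN
  have hc := qPoch_zpow_neg_div_qPoch_self hq0 hq c m
  have hN := qPoch_zpow_neg_div_qPoch_self hq0 hq (c + e) m
  have hpow : q ^ (e * m) * q ^ ((m.choose 2 : ℤ) - (c + e : ℕ) * m) =
      q ^ ((m.choose 2 : ℤ) - c * m) := by
    rw [← zpow_natCast, ← zpow_add₀ hq0]
    push_cast
    ring_nf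
  have := qPoch_self_ne_zero hq m
  rw [div_eq_iff this] at hc hN
  rw [div_eq_div_iff (qPoch_zpow_neg_ne_zero hq0 hq hm) (qBinom_ne_zero hq (by omega)), hc, hN]
  linear_combination (-1) ^ m * qPoch q q m * (-q ^ ((m.choose 2 : ℤ) - c * m) *
    qBinom_mul_qBinom hq c e m - qBinom q (c + e) m * qBinom q (c + e - m) e * hpow)

/-- The q-Chu–Vandermonde identity in terminating `₂φ₁` form. -/
theorem qPoch_zpow_neg_div_eq_sum (hq0 : q ≠ 0) (hq : ¬IsOfFinOrder q) {e N n : ℕ} (he : e ≤ N)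
    (hn : n ≤ N) :
    qPoch q (q ^ (-(e : ℤ))) n / qPoch q (q ^ (-(N : ℤ))) n =
      ∑ m ∈ range (n + 1), qPoch q (q ^ (-((N - e : ℕ) : ℤ))) m * qPoch q (q ^ (-(n : ℤ))) m /
        (qPoch q q m * qPoch q (q ^ (-(N : ℤ))) m) * q ^ ((m : ℤ) * (n - e)) := by
  obtain ⟨c, rfl⟩ := Nat.exists_eq_add_of_le' he
  rw [Nat.add_sub_cancel]
  have hterm : ∀ m ∈ range (n + 1),
      qPoch q (q ^ (-(c : ℤ))) m * qPoch q (q ^ (-(n : ℤ))) m /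
          (qPoch q q m * qPoch q (q ^ (-((c + e : ℕ) : ℤ))) m) * q ^ ((m : ℤ) * (n - e)) =
        (-1) ^ m * q ^ m.choose 2 * qBinom q n m * qBinom q (c + e - m) e / qBinom q (c + e) e := by
    intro m hm
    have hpow : q ^ (e * m) * q ^ ((m.choose 2 : ℤ) - n * m) * q ^ ((m : ℤ) * (n - e)) =
        q ^ m.choose 2 := by
      rw [← zpow_natCast, ← zpow_natCast q (m.choose 2), ← zpow_add₀ hq0, ← zpow_add₀ hq0]
      push_cast
      ring_nf
    rw [mul_comm (qPoch q q m), ← div_mul_div_comm,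
      qPoch_zpow_neg_div_qPoch_zpow_neg hq0 hq rfl (by have := mem_range.1 hm; omega),
      qPoch_zpow_neg_div_qPoch_self hq0 hq]
    have := qBinom_ne_zero hq (le_add_self : e ≤ c + e)
    field_simp
    linear_combination qBinom q (c + e - m) e * qBinom q n m * hpow
  rw [sum_congr rfl hterm, ← sum_div, ← qBinomAltSum, qBinomAltSum_qBinom hq e hn,
    qPoch_zpow_neg_div_qPoch_zpow_neg hq0 hq (add_comm e c) hn, qBinom_add_symm, mul_comm n]

theorem qPoch_zpow_neg_add_div_mul (hq0 : q ≠ 0) (hq : ¬IsOfFinOrder q) (b m p : ℕ) :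
    qPoch q (q ^ (-(b : ℤ))) (m + p) / qPoch q q (m + p) * qPoch q (q ^ (-((m + p : ℕ) : ℤ))) m *
        q ^ ((m : ℤ) * (m + p : ℕ)) =
      (-1) ^ m * q ^ m.choose 2 * qPoch q (q ^ (-(b : ℤ))) m *
        (qPoch q (q ^ (-((b - m : ℕ) : ℤ))) p / qPoch q q p) := by
  rcases le_or_gt m b with h | h
  · have hsplit : qPoch q (q ^ (-(b : ℤ))) (m + p) =
        qPoch q (q ^ (-(b : ℤ))) m * qPoch q (q ^ (-((b - m : ℕ) : ℤ))) p := by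
      rw [qPoch_add, ← zpow_natCast, ← zpow_add₀ hq0]
      push_cast [h]
      ring_nf
    have hkey := qPoch_zpow_neg_mul_qPoch_self hq0 (Nat.le_add_right m p)
    rw [Nat.add_sub_cancel_left] at hkey
    have hpow : q ^ (((m.choose 2 : ℕ) : ℤ) - (m + p : ℕ) * m) * q ^ ((m : ℤ) * (m + p : ℕ)) =
        q ^ m.choose 2 := by
      rw [← zpow_natCast q (m.choose 2), ← zpow_add₀ hq0]
      ring_nf
    have h₁ := qPoch_self_ne_zero hq (m + p)
    have h₂ := qPoch_self_ne_zero hq p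
    rw [hsplit]
    field_simp
    linear_combination qPoch q (q ^ (-(b : ℤ))) m * qPoch q (q ^ (-((b - m : ℕ) : ℤ))) p *
      (q ^ ((m : ℤ) * (m + p : ℕ)) * hkey + (-1) ^ m * qPoch q q (m + p) * hpow)
  · rw [qPoch_zpow_neg_eq_zero hq0 h, qPoch_zpow_neg_eq_zero hq0 (by omega)]
    ring

/-- The terminating basic hypergeometric series `₂φ₁(q^{-a}, q^{-b}; q^{-N}; q, z)`. -/
def phi21 (q : K) (a b N : ℕ) (z : K) : K :=
  ∑ n ∈ range (N + 1), qPoch q (q ^ (-(a : ℤ))) n * qPoch q (q ^ (-(b : ℤ))) n /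
    (qPoch q q n * qPoch q (q ^ (-(N : ℤ))) n) * z ^ n

theorem phi21_eq_sum (hq0 : q ≠ 0) (hq : ¬IsOfFinOrder q) {a b N : ℕ} (ha : a ≤ N) (hb : b ≤ N)
    (z : K) :
    phi21 q a b N z = ∑ m ∈ range (N + 1), (-1) ^ m * q ^ ((m.choose 2 : ℤ) - a * m) * z ^ m *
      (qPoch q (q ^ (-((N - a : ℕ) : ℤ))) m * qPoch q (q ^ (-(b : ℤ))) m /
        (qPoch q q m * qPoch q (q ^ (-(N : ℤ))) m)) *
      qPoch q (z * q ^ (-((b - m : ℕ) : ℤ))) (b - m) := by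
  set X : ℕ → ℕ → K := fun n m ↦ qPoch q (q ^ (-((N - a : ℕ) : ℤ))) m * qPoch q (q ^ (-(n : ℤ))) m /
    (qPoch q q m * qPoch q (q ^ (-(N : ℤ))) m)
  set T : ℕ → ℕ → K := fun n m ↦
    qPoch q (q ^ (-(b : ℤ))) n / qPoch q q n * z ^ n * (X n m * q ^ ((m : ℤ) * (n - a))) with hT
  have hexpand : phi21 q a b N z = ∑ n ∈ range (N + 1), ∑ m ∈ range (n + 1), T n m := by
    refine sum_congr rfl fun n hn ↦ ?_
    rw [hT, ← mul_sum, ← qPoch_zpow_neg_div_eq_sum hq0 hq ha (Nat.lt_succ_iff.1 (mem_range.1 hn))]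
    ring
  have hfactor : ∀ m p, T (m + p) m = (-1) ^ m * q ^ ((m.choose 2 : ℤ) - a * m) * z ^ m * X b m *
      (qPoch q (q ^ (-((b - m : ℕ) : ℤ))) p / qPoch q q p * z ^ p) := by
    intro m p
    have hpow : q ^ ((m : ℤ) * ((m + p : ℕ) - a)) =
        q ^ ((m : ℤ) * (m + p : ℕ)) * q ^ (-(a * m : ℤ)) := by
      rw [← zpow_add₀ hq0]; ring_nf
    have hchoose : q ^ ((m.choose 2 : ℤ) - a * m) = q ^ m.choose 2 * q ^ (-(a * m : ℤ)) := by
      rw [← zpow_natCast, ← zpow_add₀ hq0]; ring_nf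
    simp only [hT]
    rw [hpow, hchoose]
    linear_combination z ^ (m + p) * qPoch q (q ^ (-((N - a : ℕ) : ℤ))) m /
      (qPoch q q m * qPoch q (q ^ (-(N : ℤ))) m) * q ^ (-(a * m : ℤ)) *
        qPoch_zpow_neg_add_div_mul hq0 hq b m p
  calc phi21 q a b N z
      = ∑ n ∈ range (N + 1), ∑ m ∈ range (n + 1), T (m + (n - m)) m := by
        rw [hexpand]
        exact sum_congr rfl fun n _ ↦ sum_congr rfl fun m hm ↦ by
          rw [Nat.add_sub_cancel' (Nat.lt_succ_iff.1 (mem_range.1 hm))]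
    _ = ∑ m ∈ range (N + 1), ∑ p ∈ range (N + 1 - m), T (m + p) m :=
        sum_range_diag_flip (N + 1) fun m p ↦ T (m + p) m
    _ = _ := sum_congr rfl fun m hm ↦ by
        have hm : m ≤ N := Nat.lt_succ_iff.1 (mem_range.1 hm)
        rw [sum_congr rfl fun p _ ↦ hfactor m p, ← mul_sum, Nat.sub_add_comm hm,
          sum_qPoch_zpow_neg_div_mul_pow hq0 hq z (Nat.sub_le_sub_right hb m)]

/-- For `d ≥ 1` the quotient `(q^d;q)_k / (q;q)_{d+k-1}` is `1 / (q;q)_{d-1}`, and for `d ≤ 0` it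
vanishes as soon as `d + k ≥ 1`: either way it depends on `d = i + 1 - k` only. -/
theorem qPoch_self_mul_qPoch_comm (hq0 : q ≠ 0) {i j k l : ℕ} (h : (i : ℤ) - k = j - l) :
    qPoch q q j * qPoch q (q ^ (i + 1) * q ^ (-(k : ℤ))) k =
      qPoch q q i * qPoch q (q ^ (j + 1) * q ^ (-(l : ℤ))) l := by
  have hbase : ∀ e n : ℕ, q ^ (e + 1) * q ^ (-(n : ℤ)) = q ^ ((e : ℤ) + 1 - n) := fun e n ↦ by
    rw [← Nat.cast_succ, ← zpow_natCast, ← zpow_add₀ hq0]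
    push_cast
    ring_nf
  rw [hbase, hbase, show (j : ℤ) + 1 - l = i + 1 - k by omega]
  generalize hd : (i : ℤ) + 1 - k = d
  rcases le_or_gt 1 d with hd1 | hd1
  · obtain ⟨s, rfl⟩ : ∃ s : ℕ, d = s + 1 := ⟨(d - 1).toNat, by omega⟩
    obtain rfl : i = s + k := by omega
    obtain rfl : j = s + l := by omega
    have hs : ∀ r, qPoch q q (s + r) = qPoch q q s * qPoch q (q ^ ((s : ℤ) + 1)) r := fun r ↦ by
      rw [qPoch_add, ← pow_succ', ← Nat.cast_succ, zpow_natCast]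
    rw [hs, hs]
    ring
  · have hzero : ∀ r : ℕ, 1 ≤ d + r → qPoch q (q ^ d) r = 0 := fun r hr ↦
      prod_eq_zero (mem_range.2 (by omega : (-d).toNat < r)) (by
        rw [← zpow_natCast, ← zpow_add₀ hq0, show d + ((-d).toNat : ℤ) = 0 by omega, zpow_zero,
          sub_self])
    rw [hzero k (by omega), hzero l (by omega), mul_zero, mul_zero]

/-- Heine's transformation of a terminating `₂φ₁` at `z = q^(c+1)`. -/
theorem phi21_heine (hq0 : q ≠ 0) (hq : ¬IsOfFinOrder q) {a b c c' N : ℕ} (ha : a ≤ N) (hb : b ≤ N)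
    (h : c' + a + b = c + N) :
    qPoch q q c' * phi21 q a b N (q ^ (c + 1)) =
      qPoch q q c * phi21 q (N - b) (N - a) N (q ^ (c' + 1)) := by
  rw [phi21_eq_sum hq0 hq ha hb, phi21_eq_sum hq0 hq (Nat.sub_le N b) (Nat.sub_le N a),
    Nat.sub_sub_self hb, mul_sum, mul_sum]
  refine sum_congr rfl fun m _ ↦ ?_
  have hpow : q ^ ((m.choose 2 : ℤ) - (N - b : ℕ) * m) * (q ^ (c' + 1)) ^ m =
      q ^ ((m.choose 2 : ℤ) - a * m) * (q ^ (c + 1)) ^ m := by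
    rw [← pow_mul, ← pow_mul, ← zpow_natCast q ((c' + 1) * m), ← zpow_natCast q ((c + 1) * m),
      ← zpow_add₀ hq0, ← zpow_add₀ hq0]
    congr 1
    have : (c' : ℤ) + a + b = c + N := by exact_mod_cast h
    push_cast [hb]
    linear_combination (m : ℤ) * this
  rcases lt_or_ge b m with hbm | hbm
  · rw [qPoch_zpow_neg_eq_zero hq0 hbm]
    ring
  rcases lt_or_ge (N - a) m with ham | ham
  · rw [qPoch_zpow_neg_eq_zero hq0 ham]
    ring
  have hmatch := qPoch_self_mul_qPoch_comm hq0 (i := c) (j := c') (k := b - m) (l := N - a - m)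
    (by push_cast [hbm, ham, ha]; omega)
  set X := qPoch q (q ^ (-((N - a : ℕ) : ℤ))) m * qPoch q (q ^ (-(b : ℤ))) m /
    (qPoch q q m * qPoch q (q ^ (-(N : ℤ))) m)
  linear_combination (-1) ^ m * q ^ ((m.choose 2 : ℤ) - a * m) * (q ^ (c + 1)) ^ m * X * hmatch -
    qPoch q q c * (-1) ^ m * X * qPoch q (q ^ (c' + 1) * q ^ (-((N - a - m : ℕ) : ℤ))) (N - a - m) *
      hpow

end Field

theorem t_ne_zero : t ≠ 0 := RatFunc.X_ne_zero

theorem not_isOfFinOrder_t : ¬IsOfFinOrder t := by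
  intro hfin
  obtain ⟨n, hn, h⟩ := isOfFinOrder_iff_pow_eq_one.1 hfin
  have hX : (Polynomial.X : Polynomial ℚ) ^ n = 1 := by
    apply IsFractionRing.injective (Polynomial ℚ) (RatFunc ℚ)
    simpa [t, ← RatFunc.algebraMap_X, map_pow] using h
  have := congrArg Polynomial.natDegree hX
  rw [Polynomial.natDegree_X_pow, Polynomial.natDegree_one] at this
  omega

theorem al_eq_qPoch (m : ℕ) : al m = qPoch t t m := by
  simp only [al, qPoch, ← pow_succ']

theorem u_eq_phi21 (j i j' i' j'' i'' : ℕ) :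
    u j i j' i' j'' i'' =
      al (i + j) / (al i * al i' * al i'' * al j * al j'') *
        phi21 t i i' (i + j) (t ^ (i'' + 1)) := by
  have hvanish : ∀ n ∈ range (i + j + 1), n ∉ range (min i i' + 1) →
      qPoch t (t ^ (-(i : ℤ))) n * qPoch t (t ^ (-(i' : ℤ))) n /
        (qPoch t t n * qPoch t (t ^ (-((i + j : ℕ) : ℤ))) n) * (t ^ (i'' + 1)) ^ n = 0 := by
    intro n _ hn
    rcases le_or_gt n i with hi | hi
    · rw [qPoch_zpow_neg_eq_zero t_ne_zero (by simp at hn; omega : i' < n)]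
      ring
    · rw [qPoch_zpow_neg_eq_zero t_ne_zero hi]
      ring
  rw [u, phi21, ← sum_subset (range_subset_range.2 (by omega)) hvanish]
  congr 1
  refine sum_congr rfl fun n _ ↦ ?_
  rw [← pow_mul, mul_comm (i'' + 1), Nat.cast_add]
  rfl

/-- `u` is invariant under the Heine transformation
`(j,i,j',i',j'',i'') ↦ (i',j'',i'',j,i,j')`. -/
theorem u_heine (j i j' i' j'' i'' : ℕ)
    (h1 : (i' : ℤ) - j = (i'' : ℤ) - j') (h2 : (i'' : ℤ) - j' = (i : ℤ) - j'') :
    u j i j' i' j'' i'' = u i' j'' i'' j i j' := by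
  have heine := phi21_heine t_ne_zero not_isOfFinOrder_t (a := i) (b := i') (c := i'') (c' := j')
    (N := i + j) (by omega) (by omega) (by omega)
  rw [show i + j - i' = j'' by omega, Nat.add_sub_cancel_left, ← al_eq_qPoch, ← al_eq_qPoch]
    at heine
  have hal (m : ℕ) : al m ≠ 0 := al_eq_qPoch m ▸ qPoch_self_ne_zero not_isOfFinOrder_t m
  rw [u_eq_phi21, u_eq_phi21, show j'' + i' = i + j by omega]
  field_simp [hal]
  linear_combination heine
end

section
/- For nonnegative integers a and b, the sum \alpha_a \alpha_b \sum_{i=0}^{\min(a,b)} \frac{t^{(a-i)(b-i)}}{\alpha_{a-i}\alpha_{b-i}} is symmetric in a and b and is a polynomial in t with integer coefficients. -/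
open scoped BigOperators

/-- `S a b = α_a α_b ∑_{i=0}^{min(a,b)} t^{(a-i)(b-i)}/(α_{a-i} α_{b-i})`. -/
noncomputable def S (a b : ℕ) : RatFunc ℚ :=
  al a * al b *
    ∑ i ∈ Finset.range (min a b + 1), t ^ ((a - i) * (b - i)) / (al (a - i) * al (b - i))

/-!
Since `α_a / α_{a-i} = ∏_{s=a-i+1}^{a} (1 - t^s)`, every summand of `S a b` is the product of
`t^{(a-i)(b-i)}` with two such partial products, so `S a b` is the image of an explicit integer
polynomial. Symmetry holds summand by summand.
-/

open Polynomial Finset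

lemma algebraMap_map_intCastRingHom_eq_aeval {K : Type*} [Field K] (p : ℤ[X]) :
    algebraMap K[X] (RatFunc K) (p.map (Int.castRingHom K)) = aeval (RatFunc.X : RatFunc K) p := by
  rw [← RatFunc.aeval_X_left_eq_algebraMap, ← algebraMap_int_eq, aeval_map_algebraMap]

lemma one_sub_t_pow_ne_zero {n : ℕ} (hn : n ≠ 0) : 1 - t ^ n ≠ 0 := by
  have hX : (1 - X ^ n : ℚ[X]) ≠ 0 := by
    rw [← neg_sub, neg_ne_zero, ← C_1]
    exact X_pow_sub_C_ne_zero (Nat.pos_of_ne_zero hn) 1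
  simpa [t, RatFunc.aeval_X_left_eq_algebraMap] using
    (map_ne_zero_iff _ (RatFunc.algebraMap_injective ℚ)).mpr hX

lemma al_ne_zero (m : ℕ) : al m ≠ 0 :=
  prod_ne_zero_iff.mpr fun s _ => one_sub_t_pow_ne_zero s.succ_ne_zero

lemma al_sub_mul_prod_Ico (a i : ℕ) :
    al (a - i) * ∏ s ∈ Ico (a - i) a, (1 - t ^ (s + 1)) = al a :=
  prod_range_mul_prod_Ico _ (Nat.sub_le a i)

lemma S_comm (a b : ℕ) : S a b = S b a := by
  simp only [S, min_comm a b, mul_comm (al a), mul_comm (a - _), mul_comm (al (a - _))]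

noncomputable def SPoly (a b : ℕ) : ℤ[X] :=
  ∑ i ∈ range (min a b + 1), X ^ ((a - i) * (b - i)) *
    (∏ s ∈ Ico (a - i) a, (1 - X ^ (s + 1))) * ∏ s ∈ Ico (b - i) b, (1 - X ^ (s + 1))

lemma aeval_t_SPoly (a b : ℕ) : aeval t (SPoly a b) = S a b := by
  simp only [SPoly, S, mul_sum, map_sum, map_mul, map_prod, map_sub, map_pow, map_one, aeval_X]
  refine sum_congr rfl fun i _ => ?_
  rw [← al_sub_mul_prod_Ico a i, ← al_sub_mul_prod_Ico b i]
  field_simp [al_ne_zero]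

/-- `S a b` is symmetric in `a` and `b` and is a polynomial in `t` with integer
coefficients. -/
theorem S_symm_and_polynomial (a b : ℕ) :
    S a b = S b a ∧
      ∃ p : Polynomial ℤ,
        S a b = algebraMap (Polynomial ℚ) (RatFunc ℚ) (p.map (Int.castRingHom ℚ)) :=
  ⟨S_comm a b, SPoly a b, by rw [algebraMap_map_intCastRingHom_eq_aeval, ← aeval_t_SPoly]; rfl⟩
end
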